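/- Let f(z) = Σ_{i=0}^N c_i z^i be a polynomial over ℂ, let k_1, …, k_d be positive integers with k = Σ k_i, and let a_1, …, a_d be complex numbers. In the ring of formal Laurent series in z^{−1}, the expansion of f(z)/∏_{i=1}^d (z^{k_i} − a_i) has polynomial part f_0(z) = Σ_{j=0}^{N−k} d_j z^j, where d_j = Σ_{i=k+j}^{N} c_i · ( Σ_{ℓ_1 k_1 + ⋯ + ℓ_d k_d = i−k−j} a_1^{ℓ_1} ⋯ a_d^{ℓ_d} ), the inner sum being over all d-tuples of nonnegative integers (ℓ_1,…,ℓ_d) with Σ ℓ_i k_i = i − k − j. -/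

import Mathlib

/-!
Put `t = z⁻¹`. Then `z ^ k - a = t ^ (-k) * (1 - a t ^ k)`, so each factor `(z ^ k - a)⁻¹` is
`t ^ k` times the geometric series `∑ ℓ, a ^ ℓ t ^ (k ℓ)`, and `F = f(z) t ^ K Q(t)` with `Q` the
product of these geometric series. The coefficient of `z ^ j = t ^ (-j)` in `F` is therefore
`∑ i, c i [t ^ (i - K - j)] Q`. Since every `k t ≥ 1`, modulo `t ^ (N + 1)` each geometric series
may be truncated to `ℓ ≤ N`, and expanding the product of the truncated sums gives the sum over
exponent vectors `ℓ : Fin d → Fin (N + 1)`.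
-/

open Finset PowerSeries

namespace PowerSeries

variable {R : Type*}

theorem coeff_prod_geom_sum [CommSemiring R] {ι : Type*} [Fintype ι] [DecidableEq ι]
    (k : ι → ℕ) (a : ι → R) (N n : ℕ) :
    coeff n (∏ t, ∑ ℓ ∈ range (N + 1), (C (a t) * X ^ k t) ^ ℓ) =
      ∑ ℓ ∈ (univ : Finset (ι → Fin (N + 1))).filter (fun ℓ => ∑ t, (ℓ t : ℕ) * k t = n),
        ∏ t, a t ^ (ℓ t : ℕ) := by
  have hmonomial : ∀ ℓ : ι → Fin (N + 1), ∏ t, (C (a t) * X ^ k t) ^ (ℓ t : ℕ) =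
      C (∏ t, a t ^ (ℓ t : ℕ)) * X ^ (∑ t, (ℓ t : ℕ) * k t) := by
    intro ℓ
    simp only [mul_pow, ← pow_mul, prod_mul_distrib, map_prod, map_pow, prod_pow_eq_pow_sum,
      mul_comm (k _)]
  simp only [← Fin.sum_univ_eq_sum_range, Fintype.prod_sum, hmonomial, map_sum,
    coeff_C_mul_X_pow, sum_filter, eq_comm]

variable [Field R]

theorem inv_one_sub_C_mul_X_pow_sModEq_geom_sum {k : ℕ} (hk : 0 < k) (a : R) (n : ℕ) :
    (1 - C a * X ^ k)⁻¹ ≡ ∑ ℓ ∈ range n, (C a * X ^ k) ^ ℓ [SMOD Ideal.span {(X : R⟦X⟧) ^ n}] := by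
  set x : R⟦X⟧ := C a * X ^ k
  have hunit : (1 - x) * (1 - x)⁻¹ = 1 :=
    PowerSeries.mul_inv_cancel _ (by simp [x, hk.ne'])
  have htail : (1 - x)⁻¹ - ∑ ℓ ∈ range n, x ^ ℓ = (1 - x)⁻¹ * x ^ n := by
    calc (1 - x)⁻¹ - ∑ ℓ ∈ range n, x ^ ℓ
        = (1 - x)⁻¹ * (1 - (1 - x) * ∑ ℓ ∈ range n, x ^ ℓ) := by
          rw [mul_sub, mul_one, ← mul_assoc, mul_comm _ (1 - x), hunit, one_mul]
      _ = (1 - x)⁻¹ * x ^ n := by rw [mul_neg_geom_sum, sub_sub_cancel]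
  have hX : (X : R⟦X⟧) ∣ x := (dvd_pow_self X hk.ne').mul_left _
  rw [SModEq.sub_mem, Ideal.mem_span_singleton, htail]
  exact (pow_dvd_pow_of_dvd hX n).mul_left _

theorem coeff_prod_inv_one_sub_C_mul_X_pow {ι : Type*} [Fintype ι] [DecidableEq ι]
    {k : ι → ℕ} (hk : ∀ t, 0 < k t) (a : ι → R) {N n : ℕ} (hn : n ≤ N) :
    coeff n (∏ t, (1 - C (a t) * X ^ k t)⁻¹) =
      ∑ ℓ ∈ (univ : Finset (ι → Fin (N + 1))).filter (fun ℓ => ∑ t, (ℓ t : ℕ) * k t = n),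
        ∏ t, a t ^ (ℓ t : ℕ) := by
  have hcongr := SModEq.prod fun t (_ : t ∈ univ) =>
    inv_one_sub_C_mul_X_pow_sModEq_geom_sum (hk t) (a t) (N + 1)
  rw [SModEq.sub_mem, Ideal.mem_span_singleton, X_pow_dvd_iff] at hcongr
  rw [← coeff_prod_geom_sum, ← sub_eq_zero, ← map_sub]
  exact hcongr n (by omega)

end PowerSeries

namespace LaurentSeries

open HahnSeries

variable {R : Type*}

theorem coeff_single_mul_coe [Semiring R] (b m : ℤ) (r : R) (f : R⟦X⟧) :
    (single b r * (f : R⸨X⸩)).coeff m = if b ≤ m then r * coeff (m - b).toNat f else 0 := by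
  rw [coeff_single_mul, coeff_coe]
  split_ifs
  · omega
  · rw [mul_zero]
  · rw [show (m - b).natAbs = (m - b).toNat by omega]
  · omega

variable [Field R]

theorem inv_single_neg_sub_single_zero (k : ℕ) (hk : 0 < k) (a : R) :
    (single (-(k : ℤ)) 1 - single 0 a)⁻¹ =
      ((X ^ k * (1 - PowerSeries.C a * X ^ k)⁻¹ : R⟦X⟧) : R⸨X⸩) := by
  set g : R⟦X⟧ := 1 - PowerSeries.C a * X ^ k
  have hfactor : single (-(k : ℤ)) 1 - single 0 a = single (-(k : ℤ)) (1 : R) * (g : R⸨X⸩) := by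
    simp [g, mul_sub, HahnSeries.C_apply, single_mul_single]
  refine inv_eq_of_mul_eq_one_right ?_
  rw [hfactor, map_mul, mul_mul_mul_comm, ← map_mul (ofPowerSeries ℤ R),
    PowerSeries.mul_inv_cancel _ (by simp [g, hk.ne']), map_one (ofPowerSeries ℤ R), mul_one,
    ofPowerSeries_X_pow, single_mul_single, neg_add_cancel, mul_one, single_zero_one]

end LaurentSeries

/-- **Formula (2.7).** Let `f(z) = Σ_{i=0}^N c i z^i`, let `k 1, …, k d` be positive
integers with `k = Σ k i`, and `a 1, …, a d ∈ ℂ`. Expanding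
`f(z)/∏ (z^{k i} − a i)` as a formal Laurent series in `z⁻¹` (here realized in the
field of formal Laurent series in the variable `t = z⁻¹`, so that `z^j` is `t^{-j}`),
the polynomial part is `Σ_{j=0}^{N−k} d_j z^j` where
`d_j = Σ_{i=k+j}^N c i · Σ_{ℓ₁k₁+⋯+ℓ_d k_d = i−k−j} a₁^{ℓ₁}⋯a_d^{ℓ_d}`. -/
theorem stmt7 (N d : ℕ) (c : ℕ → ℂ) (k : Fin d → ℕ) (hk : ∀ i, 0 < k i)
    (a : Fin d → ℂ)
    (K : ℕ) (hK : K = ∑ i : Fin d, k i)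
    (F : LaurentSeries ℂ)
    (hF : F = (∑ i ∈ Finset.range (N + 1), HahnSeries.single (-(i : ℤ)) (c i)) *
      ∏ i : Fin d,
        (HahnSeries.single (-(k i : ℤ)) (1 : ℂ) - HahnSeries.single (0 : ℤ) (a i))⁻¹) :
    ∀ j : ℕ, F.coeff (-(j : ℤ)) =
      ∑ i ∈ Finset.Icc (K + j) N, c i *
        ∑ ℓ ∈ (Finset.univ : Finset (Fin d → Fin (N + 1))).filter
            (fun ℓ => ∑ t : Fin d, (ℓ t : ℕ) * k t = i - K - j),
          ∏ t : Fin d, a t ^ (ℓ t : ℕ) := by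
  intro j
  set Q : ℂ⟦X⟧ := ∏ t, (1 - PowerSeries.C (a t) * X ^ k t)⁻¹
  have hprod : ∏ t, (HahnSeries.single (-(k t : ℤ)) (1 : ℂ) - HahnSeries.single 0 (a t))⁻¹ =
      HahnSeries.single (K : ℤ) 1 * (Q : LaurentSeries ℂ) := by
    simp_rw [LaurentSeries.inv_single_neg_sub_single_zero _ (hk _), ← map_prod, prod_mul_distrib,
      prod_pow_eq_pow_sum, ← hK, map_mul, HahnSeries.ofPowerSeries_X_pow, Q]
  rw [hF, hprod, ← mul_assoc, sum_mul, sum_mul, HahnSeries.coeff_sum]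
  simp only [HahnSeries.single_mul_single, mul_one, LaurentSeries.coeff_single_mul_coe]
  rw [← sum_filter]
  refine sum_congr (by ext i; simp only [mem_filter, mem_range, mem_Icc]; omega) fun i hi => ?_
  rw [mem_Icc] at hi
  rw [show (-(j : ℤ) - (-(i : ℤ) + K)).toNat = i - K - j by omega,
    coeff_prod_inv_one_sub_C_mul_X_pow hk a (N := N) (by omega)]
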